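/- Let H be a real Hilbert space, B : H → H an L-Lipschitz map with L > 0, and (x_k)_{k≥0} any sequence in H. Fix constants 0 < c₁ < c₂, an initial value λ₀ > 0, and a summable sequence (γ_k)_{k≥0} of nonnegative reals, and define λ_k for k ≥ 1 by the adaptive rule: λ_k = c₁‖x_{k−1} − x_k‖/‖B x_{k−1} − B x_k‖ if ‖B x_{k−1} − B x_k‖ > (c₂/λ_{k−1})‖x_{k−1} − x_k‖, and λ_k = (1 + γ_{k−1}) λ_{k−1} otherwise. Then there exists a natural number k₁ such that for all k ≥ k₁, λ_{k−1}⟨B x_k − B x_{k−1}, x_k − x_{k+1}⟩ ≤ (c₂/2)‖x_k − x_{k−1}‖² + (c₂/2)‖x_{k+1} − x_k‖². -/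

import Mathlib

/-! The step sizes are bounded below by `min λ₀ (c₁ / L)`, since in the reduction branch
`‖B x_{k-1} - B x_k‖ ≤ L ‖x_{k-1} - x_k‖`. On the other hand each reduction multiplies the step by
at most `c₁ / c₂ < 1`, while all the increases together multiply it by at most
`∏ (1 + γ_k) ≤ exp (∑ γ_k)`. Hence only finitely many reductions occur, and afterwards
`λ_{k-1} ‖B x_k - B x_{k-1}‖ ≤ c₂ ‖x_k - x_{k-1}‖`; Cauchy–Schwarz and `2st ≤ s² + t²` conclude. -/

open Filter RealInnerProductSpace

theorem Nat.eventually_not_of_count_le {p : ℕ → Prop} [DecidablePred p] (M : ℕ)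
    (h : ∀ n, Nat.count p n ≤ M) : ∀ᶠ k in atTop, ¬ p k := by
  have hfin : {k | p k}.Finite := by
    by_contra hinf
    have := h (Nat.nth p (M + 1))
    rw [Nat.count_nth_of_infinite hinf] at this
    omega
  rw [← Nat.cofinite_eq_atTop, eventually_cofinite]
  simpa using hfin

theorem Nat.eventually_not_of_le_mul_pow_count {p : ℕ → Prop} [DecidablePred p] {m C q : ℝ}
    (hm : 0 < m) (hq₀ : 0 < q) (hq₁ : q < 1) (h : ∀ n, m ≤ C * q ^ Nat.count p n) :
    ∀ᶠ k in atTop, ¬ p k := by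
  have hC : 0 < C := by simpa using hm.trans_le (h 0)
  obtain ⟨M, hM⟩ := exists_pow_lt_of_lt_one (by positivity : 0 < m / C) hq₁
  refine Nat.eventually_not_of_count_le M fun n ↦ ?_
  rw [← pow_le_pow_iff_right_of_lt_one₀ hq₀ hq₁]
  have := (h n).trans_lt' ((lt_div_iff₀' hC).1 hM)
  exact (lt_of_mul_lt_mul_left this hC.le).le

theorem real_inner_le_of_mul_norm_le {H : Type*} [NormedAddCommGroup H] [InnerProductSpace ℝ H]
    {u v w : H} {lam c : ℝ} (hlam : 0 ≤ lam) (hc : 0 ≤ c) (h : lam * ‖u‖ ≤ c * ‖v‖) :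
    lam * ⟪u, w⟫ ≤ c / 2 * ‖v‖ ^ 2 + c / 2 * ‖w‖ ^ 2 :=
  calc lam * ⟪u, w⟫ ≤ lam * ‖u‖ * ‖w‖ := by
        rw [mul_assoc]; exact mul_le_mul_of_nonneg_left (real_inner_le_norm u w) hlam
    _ ≤ c * ‖v‖ * ‖w‖ := mul_le_mul_of_nonneg_right h (norm_nonneg w)
    _ ≤ c / 2 * ‖v‖ ^ 2 + c / 2 * ‖w‖ ^ 2 := by
        nlinarith [mul_le_mul_of_nonneg_left (two_mul_le_add_sq ‖v‖ ‖w‖) hc]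

/-- One step of the adaptive rule, with `a = ‖x_k - x_{k+1}‖` and `b = ‖B x_k - B x_{k+1}‖`. -/
noncomputable def adaptiveStep (c₁ c₂ γ lam a b : ℝ) : ℝ :=
  if c₂ / lam * a < b then c₁ * a / b else (1 + γ) * lam

noncomputable def adaptiveStepSizes (c₁ c₂ lam₀ : ℝ) (γ a b : ℕ → ℝ) : ℕ → ℝ
  | 0 => lam₀
  | k + 1 => adaptiveStep c₁ c₂ (γ k) (adaptiveStepSizes c₁ c₂ lam₀ γ a b k) (a k) (b k)

section Step

variable {c₁ c₂ γ lam a b L : ℝ}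

theorem pos_of_adaptiveStep_reduces (hc₂ : 0 ≤ c₂) (hlam : 0 < lam) (ha : 0 ≤ a)
    (hab : b ≤ L * a) (h : c₂ / lam * a < b) : 0 < a ∧ 0 < b := by
  have hb : 0 < b := h.trans_le' (by positivity)
  refine ⟨ha.lt_of_ne ?_, hb⟩
  rintro rfl
  simp only [mul_zero] at hab
  linarith

theorem adaptiveStep_pos (hc₁ : 0 < c₁) (hc₂ : 0 ≤ c₂) (hγ : 0 ≤ γ) (hlam : 0 < lam)
    (ha : 0 ≤ a) (hab : b ≤ L * a) : 0 < adaptiveStep c₁ c₂ γ lam a b := by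
  unfold adaptiveStep
  split_ifs with h
  · obtain ⟨ha, hb⟩ := pos_of_adaptiveStep_reduces hc₂ hlam ha hab h
    positivity
  · positivity

theorem min_le_adaptiveStep (hL : 0 < L) (hc₁ : 0 < c₁) (hc₂ : 0 ≤ c₂) (hγ : 0 ≤ γ)
    (hlam : 0 < lam) (ha : 0 ≤ a) (hab : b ≤ L * a) :
    min lam (c₁ / L) ≤ adaptiveStep c₁ c₂ γ lam a b := by
  unfold adaptiveStep
  split_ifs with h
  · obtain ⟨-, hb⟩ := pos_of_adaptiveStep_reduces hc₂ hlam ha hab h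
    refine (min_le_right _ _).trans ?_
    rw [div_le_div_iff₀ hL hb, mul_assoc]
    exact mul_le_mul_of_nonneg_left (by linarith) hc₁.le
  · exact (min_le_left _ _).trans (le_mul_of_one_le_left hlam.le (by linarith))

theorem adaptiveStep_le (hc₁ : 0 ≤ c₁) (hc₂ : 0 < c₂) (hγ : 0 ≤ γ) (hlam : 0 < lam)
    (ha : 0 ≤ a) :
    adaptiveStep c₁ c₂ γ lam a b ≤ (1 + γ) * (if c₂ / lam * a < b then c₁ / c₂ else 1) * lam := by
  unfold adaptiveStep
  split_ifs with h
  · have hb : 0 < b := h.trans_le' (by positivity)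
    have hred : c₁ * a / b ≤ c₁ / c₂ * lam := by
      rw [div_mul_eq_mul_div, div_lt_iff₀ hlam] at h
      rw [div_le_iff₀ hb, div_mul_eq_mul_div, div_mul_eq_mul_div, le_div_iff₀ hc₂]
      nlinarith
    calc c₁ * a / b ≤ c₁ / c₂ * lam := hred
      _ ≤ (1 + γ) * (c₁ / c₂) * lam := by
        rw [mul_assoc]; exact le_mul_of_one_le_left (by positivity) (by linarith)
  · rw [mul_one]

theorem mul_le_of_not_adaptiveStep_reduces (hlam : 0 < lam) (h : ¬ c₂ / lam * a < b) :
    lam * b ≤ c₂ * a := by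
  rw [not_lt, div_mul_eq_mul_div, le_div_iff₀ hlam] at h
  linarith

end Step

section Sizes

variable {c₁ c₂ lam₀ L : ℝ} {γ a b : ℕ → ℝ}

local notation "λₛ" => adaptiveStepSizes c₁ c₂ lam₀ γ a b

theorem adaptiveStepSizes_pos (hlam₀ : 0 < lam₀) (hc₁ : 0 < c₁) (hc₂ : 0 ≤ c₂)
    (hγ : ∀ k, 0 ≤ γ k) (ha : ∀ k, 0 ≤ a k) (hab : ∀ k, b k ≤ L * a k) : ∀ n, 0 < λₛ n
  | 0 => hlam₀
  | n + 1 => adaptiveStep_pos hc₁ hc₂ (hγ n)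
      (adaptiveStepSizes_pos hlam₀ hc₁ hc₂ hγ ha hab n) (ha n) (hab n)

theorem min_le_adaptiveStepSizes (hL : 0 < L) (hlam₀ : 0 < lam₀) (hc₁ : 0 < c₁) (hc₂ : 0 ≤ c₂)
    (hγ : ∀ k, 0 ≤ γ k) (ha : ∀ k, 0 ≤ a k) (hab : ∀ k, b k ≤ L * a k) :
    ∀ n, min lam₀ (c₁ / L) ≤ λₛ n
  | 0 => min_le_left _ _
  | n + 1 => by
    have hpos := adaptiveStepSizes_pos hlam₀ hc₁ hc₂ hγ ha hab n
    have ih := min_le_adaptiveStepSizes hL hlam₀ hc₁ hc₂ hγ ha hab n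
    exact (le_min ih (min_le_right _ _)).trans
      (min_le_adaptiveStep hL hc₁ hc₂ (hγ n) hpos (ha n) (hab n))

theorem adaptiveStepSizes_le (hlam₀ : 0 < lam₀) (hc₁ : 0 < c₁) (hc₂ : 0 < c₂)
    (hγ : ∀ k, 0 ≤ γ k) (ha : ∀ k, 0 ≤ a k) (hab : ∀ k, b k ≤ L * a k) (n : ℕ) :
    λₛ n ≤ lam₀ * (∏ k ∈ Finset.range n, (1 + γ k)) *
      (c₁ / c₂) ^ Nat.count (fun k ↦ c₂ / λₛ k * a k < b k) n := by
  induction n with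
  | zero => simp [adaptiveStepSizes]
  | succ n ih =>
    have hpos := adaptiveStepSizes_pos hlam₀ hc₁ hc₂.le hγ ha hab n
    have hfactor : 0 ≤ (1 + γ n) * (if c₂ / λₛ n * a n < b n then c₁ / c₂ else 1) := by
      have := hγ n
      split_ifs <;> positivity
    calc λₛ (n + 1) ≤ (1 + γ n) * (if c₂ / λₛ n * a n < b n then c₁ / c₂ else 1) * λₛ n :=
          adaptiveStep_le hc₁.le hc₂ (hγ n) hpos (ha n)
      _ ≤ _ := mul_le_mul_of_nonneg_left ih hfactor
      _ = _ := by
        rw [Finset.prod_range_succ, Nat.count_succ]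
        split_ifs <;> ring

theorem eventually_not_adaptiveStepSizes_reduces (hL : 0 < L) (hlam₀ : 0 < lam₀) (hc₁ : 0 < c₁)
    (hc₁₂ : c₁ < c₂) (hγ : ∀ k, 0 ≤ γ k) (hγsum : Summable γ) (ha : ∀ k, 0 ≤ a k)
    (hab : ∀ k, b k ≤ L * a k) : ∀ᶠ k in atTop, ¬ c₂ / λₛ k * a k < b k := by
  have hc₂ : 0 < c₂ := hc₁.trans hc₁₂
  refine Nat.eventually_not_of_le_mul_pow_count (C := lam₀ * Real.exp (∑' k, γ k))
    (lt_min hlam₀ (div_pos hc₁ hL)) (div_pos hc₁ hc₂) ((div_lt_one hc₂).2 hc₁₂) fun n ↦ ?_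
  have hprod : ∏ k ∈ Finset.range n, (1 + γ k) ≤ Real.exp (∑' k, γ k) :=
    (Real.prod_one_add_le_exp_sum _ hγ).trans
      (Real.exp_le_exp.2 (hγsum.sum_le_tsum _ fun k _ ↦ hγ k))
  refine (min_le_adaptiveStepSizes hL hlam₀ hc₁ hc₂.le hγ ha hab n).trans <|
    (adaptiveStepSizes_le hlam₀ hc₁ hc₂ hγ ha hab n).trans ?_
  gcongr

end Sizes

/-- The key step-size estimate: eventually
`λ_{k-1}⟨B x_k − B x_{k-1}, x_k − x_{k+1}⟩ ≤ (c₂/2)‖x_k − x_{k-1}‖² + (c₂/2)‖x_{k+1} − x_k‖²`. -/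
theorem adaptive_stepsize_inner_product_estimate
    {H : Type*} [NormedAddCommGroup H] [InnerProductSpace ℝ H]
    (B : H → H) (L : ℝ) (hL : 0 < L)
    (hLip : ∀ x y : H, ‖B x - B y‖ ≤ L * ‖x - y‖)
    (x : ℕ → H) (c₁ c₂ : ℝ) (hc₁ : 0 < c₁) (hc₁₂ : c₁ < c₂)
    (γ : ℕ → ℝ) (hγ : ∀ k, 0 ≤ γ k) (hγsum : Summable γ)
    (lam : ℕ → ℝ) (hlam0 : 0 < lam 0)
    (hrule : ∀ k : ℕ,
      lam (k + 1) =
        if (c₂ / lam k) * ‖x k - x (k + 1)‖ < ‖B (x k) - B (x (k + 1))‖ then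
          c₁ * ‖x k - x (k + 1)‖ / ‖B (x k) - B (x (k + 1))‖
        else (1 + γ k) * lam k) :
    ∃ k₁ : ℕ, 1 ≤ k₁ ∧ ∀ k : ℕ, k₁ ≤ k →
      lam (k - 1) * ⟪B (x k) - B (x (k - 1)), x k - x (k + 1)⟫ ≤
        c₂ / 2 * ‖x k - x (k - 1)‖ ^ 2 + c₂ / 2 * ‖x (k + 1) - x k‖ ^ 2 := by
  have hlam : lam = adaptiveStepSizes c₁ c₂ (lam 0) γ (fun k ↦ ‖x k - x (k + 1)‖)
      (fun k ↦ ‖B (x k) - B (x (k + 1))‖) := by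
    funext n
    induction n with
    | zero => rfl
    | succ n ih => rw [hrule n, ih]; rfl
  have hc₂ : 0 < c₂ := hc₁.trans hc₁₂
  have hab : ∀ k, ‖B (x k) - B (x (k + 1))‖ ≤ L * ‖x k - x (k + 1)‖ := fun k ↦ hLip _ _
  obtain ⟨N, hN⟩ := (eventually_not_adaptiveStepSizes_reduces hL hlam0 hc₁ hc₁₂ hγ hγsum
    (fun k ↦ norm_nonneg _) hab).exists_forall_of_atTop
  rw [← hlam] at hN
  refine ⟨N + 1, Nat.le_add_left 1 N, fun k hk ↦ ?_⟩
  obtain ⟨j, rfl⟩ : ∃ j, k = j + 1 := ⟨k - 1, by omega⟩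
  have hpos : 0 < lam j :=
    hlam ▸ adaptiveStepSizes_pos hlam0 hc₁ hc₂.le hγ (fun k ↦ norm_nonneg _) hab j
  have hstep : lam j * ‖B (x (j + 1)) - B (x j)‖ ≤ c₂ * ‖x (j + 1) - x j‖ := by
    rw [norm_sub_rev, norm_sub_rev (x _)]
    exact mul_le_of_not_adaptiveStep_reduces hpos (hN j (by omega))
  rw [Nat.add_sub_cancel, norm_sub_rev (x (j + 1 + 1))]
  exact real_inner_le_of_mul_norm_le hpos.le hc₂.le hstep
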